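/- arXiv:2111.10702 — 2 statements merged into one kernel-verified Lean document; each statement's English description precedes it below -/
import Mathlib

section
/- For every nonnegative integer n, Q_2(n) = \sum_{k=0}^{\infty} (-1)^{k(k+1)/2} pod(n - k(k+1)), where terms with negative argument are zero. -/
/-- `Q2 n`: number of partitions of `n` into distinct parts none ≡ 2 (mod 4). -/
noncomputable def Q2 (n : ℕ) : ℕ :=
  Nat.card {p : n.Partition // p.parts.Nodup ∧ ∀ x ∈ p.parts, x % 4 ≠ 2}

/-- `pod n`: partitions of `n` into parts not congruent to 2 mod 4. -/
noncomputable def pod (n : ℕ) : ℕ :=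
  Nat.card {p : n.Partition // ∀ x ∈ p.parts, x % 4 ≠ 2}

/-- `pod` extended to integer arguments, zero on negatives. -/
noncomputable def podZ (m : ℤ) : ℕ := if 0 ≤ m then pod m.toNat else 0

/-!
With `S` the set of positive integers `≢ 2 (mod 4)`, the generating function of `Q2` is
`∏_{j ∈ S} (1 + X^j) = ∏_{j ∈ S} (1 - X^j)⁻¹ * ∏_{j ∈ S} (1 - X^(2j))`, and the first factor
generates `pod`. The second factor is `∏_{i ≥ 0} (1 - X^(8i+2)) (1 - X^(8i+6)) (1 - X^(8i+8))`,
which by the Jacobi triple product (with `q = X^4`, `z = -X^2`) is `∑_{t ∈ ℤ} (-1)^t X^(4t²+2t)`.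
Under `t ↦ 2t` for `t ≥ 0` and `t ↦ -2t-1` for `t < 0` (that is, `Equiv.intEquivNat`), the exponent
`4t² + 2t` becomes `k(k+1)` and the sign becomes `(-1)^(k(k+1)/2)`.

Only finite products are needed for a fixed coefficient: the finite triple product
`∏_{i<K} (1 - X^(8i+2)) (1 - X^(8i+6)) = ∑_t (-1)^t X^(4t²+2t) [2K, K+t]_{X^8}` follows by
induction on `K` from the `q`-Pascal rules, and `(X^8; X^8)_K [2K, K+t]_{X^8} ≡ 1` modulo
`X^(8(K-|t|+1))`, which is invisible in the coefficients that matter once `K > n`.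
-/

open Finset PowerSeries
open scoped PowerSeries.WithPiTopology

theorem dvd_prod_sub_one {R ι : Type*} [CommRing R] {x : R} {s : Finset ι} {f : ι → R}
    (h : ∀ i ∈ s, x ∣ f i - 1) : x ∣ ∏ i ∈ s, f i - 1 := by
  simp_rw [← Ideal.mem_span_singleton, ← Ideal.Quotient.eq, map_one] at h ⊢
  rw [map_prod, prod_congr rfl h, prod_const_one]

namespace PowerSeries

variable {R : Type*} [CommRing R]

theorem coeff_mul_of_X_pow_dvd_sub_one {f g : R⟦X⟧} {n : ℕ} (h : X ^ (n + 1) ∣ g - 1) :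
    coeff n (f * g) = coeff n f := by
  rw [show f * g = f + f * (g - 1) by ring, map_add,
    X_pow_dvd_iff.mp (dvd_mul_of_dvd_right h f) n n.lt_succ_self, add_zero]

theorem coeff_eq_coeff_prod_range_of_hasProd [TopologicalSpace R] [T2Space R]
    {f : ℕ → R⟦X⟧} {P : R⟦X⟧} (hP : HasProd f P) {n M : ℕ}
    (hf : ∀ i, M ≤ i → X ^ (n + 1) ∣ f i - 1) :
    coeff n P = coeff n (∏ i ∈ range M, f i) := by
  refine tendsto_nhds_unique ((WithPiTopology.tendsto_iff_coeff_tendsto R _ _ _).mp hP n)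
    (tendsto_const_nhds.congr' ?_)
  filter_upwards [Filter.eventually_ge_atTop (range M)] with s hs
  rw [← prod_sdiff hs, mul_comm, coeff_mul_of_X_pow_dvd_sub_one]
  exact dvd_prod_sub_one fun i hi => hf i (by simpa using (mem_sdiff.mp hi).2)

variable {k : Type*} [Field k]

theorem tsum_X_pow_mul_eq_inv [TopologicalSpace k] [IsTopologicalRing k] [T2Space k] {m : ℕ}
    (hm : m ≠ 0) : ∑' j, (X : k⟦X⟧) ^ (m * j) = (1 - X ^ m)⁻¹ := by
  have hc : constantCoeff ((X : k⟦X⟧) ^ m) = 0 := by simp [hm]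
  rw [eq_inv_iff_mul_eq_one (by simp [hc])]
  simp_rw [pow_mul]
  exact WithPiTopology.tsum_pow_mul_one_sub_of_constantCoeff_eq_zero hc

theorem X_pow_dvd_inv_one_sub_X_pow_sub_one {m : ℕ} (hm : m ≠ 0) :
    (X : k⟦X⟧) ^ m ∣ (1 - X ^ m)⁻¹ - 1 :=
  ⟨(1 - X ^ m)⁻¹, by
    linear_combination PowerSeries.inv_mul_cancel (1 - (X : k⟦X⟧) ^ m) (by simp [hm])⟩

theorem prod_one_add_X_pow {s : Finset ℕ} (hs : 0 ∉ s) :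
    ∏ j ∈ s, (1 + (X : k⟦X⟧) ^ j) = (∏ j ∈ s, (1 - X ^ j)⁻¹) * ∏ j ∈ s, (1 - X ^ (2 * j)) := by
  rw [← prod_mul_distrib]
  refine prod_congr rfl fun j hj => ?_
  have hj : j ≠ 0 := by rintro rfl; exact hs hj
  linear_combination (-(1 + X ^ j)) * PowerSeries.inv_mul_cancel (1 - (X : k⟦X⟧) ^ j) (by simp [hj])

end PowerSeries

def allowedParts (M : ℕ) : Finset ℕ := {j ∈ Icc 1 M | j % 4 ≠ 2}

theorem prod_allowedParts {α : Type*} [CommMonoid α] (M : ℕ) (g : ℕ → α) :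
    ∏ j ∈ allowedParts M, g j = ∏ i ∈ range M, if (i + 1) % 4 ≠ 2 then g (i + 1) else 1 := by
  rw [allowedParts, prod_filter, range_eq_Ico,
    prod_Ico_add' (fun j => if j % 4 ≠ 2 then g j else 1)]
  rfl

theorem allowedParts_four_mul_succ (K : ℕ) :
    allowedParts (4 * (K + 1)) =
      insert (4 * K + 1) (insert (4 * K + 3) (insert (4 * K + 4) (allowedParts (4 * K)))) := by
  ext j
  simp only [allowedParts, mem_insert, mem_filter, mem_Icc]
  omega

theorem pod_eq_coeff {n M : ℕ} (h : n ≤ M) :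
    (pod n : ℚ) = coeff n (∏ j ∈ allowedParts M, (1 - X ^ j)⁻¹) := by
  have hP := Nat.Partition.hasProd_powerSeriesMk_card_restricted ℚ (· % 4 ≠ 2)
  simp_rw [tsum_X_pow_mul_eq_inv (Nat.succ_ne_zero _)] at hP
  rw [prod_allowedParts, ← coeff_eq_coeff_prod_range_of_hasProd hP, coeff_mk, pod,
    Nat.card_eq_fintype_card, Fintype.card_subtype, Nat.Partition.restricted]
  intro i hi
  split_ifs
  · exact (pow_dvd_pow X (by omega)).trans (X_pow_dvd_inv_one_sub_X_pow_sub_one (by omega))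
  · simp

theorem Q2_eq_coeff {n M : ℕ} (h : n ≤ M) :
    (Q2 n : ℚ) = coeff n (∏ j ∈ allowedParts M, (1 + X ^ j)) := by
  have hP := Nat.Partition.hasProd_genFun (R := ℚ) fun i c => if i % 4 ≠ 2 ∧ c = 1 then 1 else 0
  have hfactor (i : ℕ) : (1 + ∑' j, (if (i + 1) % 4 ≠ 2 ∧ j + 1 = 1 then (1 : ℚ) else 0) •
      (X : ℚ⟦X⟧) ^ ((i + 1) * (j + 1))) = if (i + 1) % 4 ≠ 2 then 1 + X ^ (i + 1) else 1 := by
    rw [tsum_eq_single 0 (fun j hj => by simp [hj])]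
    split_ifs <;> simp_all
  simp_rw [hfactor] at hP
  rw [prod_allowedParts, ← coeff_eq_coeff_prod_range_of_hasProd hP, Nat.Partition.genFun,
    coeff_mk, Q2, Nat.card_eq_fintype_card, Fintype.card_subtype, card_eq_sum_ones, sum_filter]
  · push_cast
    refine sum_congr rfl fun p _ => ?_
    rw [Finsupp.prod, prod_boole]
    congr 1
    simp only [Multiset.toFinsupp_support, Multiset.toFinsupp_apply, Multiset.mem_toFinset,
      Multiset.nodup_iff_count_eq_one]
    grind
  intro i hi
  split_ifs
  · exact ⟨X ^ (i - n), by rw [add_sub_cancel_left, ← pow_add]; congr 1; omega⟩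
  · simp

noncomputable section QBinomial

variable {k : Type*} [Field k]

def qPochhammer (q : k⟦X⟧) (n : ℕ) : k⟦X⟧ := ∏ i ∈ range n, (1 - q ^ (i + 1))

theorem qPochhammer_zero (q : k⟦X⟧) : qPochhammer q 0 = 1 := prod_range_zero _

theorem qPochhammer_succ (q : k⟦X⟧) (n : ℕ) :
    qPochhammer q (n + 1) = qPochhammer q n * (1 - q ^ (n + 1)) :=
  prod_range_succ _ _

theorem qPochhammer_mul_prod_Ico (q : k⟦X⟧) {a b : ℕ} (h : a ≤ b) :
    qPochhammer q a * ∏ i ∈ Ico a b, (1 - q ^ (i + 1)) = qPochhammer q b :=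
  prod_range_mul_prod_Ico _ h

variable {q : k⟦X⟧}

theorem constantCoeff_qPochhammer (hq : constantCoeff q = 0) (n : ℕ) :
    constantCoeff (qPochhammer q n) = 1 := by
  simp [qPochhammer, map_prod, hq]

theorem qPochhammer_mul_inv (hq : constantCoeff q = 0) (n : ℕ) :
    qPochhammer q n * (qPochhammer q n)⁻¹ = 1 :=
  PowerSeries.mul_inv_cancel _ (by simp [constantCoeff_qPochhammer hq])

theorem qPochhammer_ne_zero (hq : constantCoeff q = 0) (n : ℕ) : qPochhammer q n ≠ 0 :=
  fun h => by simpa [h] using constantCoeff_qPochhammer hq n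

theorem pow_dvd_qPochhammer_mul_inv_sub_one (hq : constantCoeff q = 0) {a b : ℕ} (h : a ≤ b) :
    q ^ (a + 1) ∣ qPochhammer q b * (qPochhammer q a)⁻¹ - 1 := by
  rw [← qPochhammer_mul_prod_Ico q h, mul_right_comm, qPochhammer_mul_inv hq, one_mul]
  refine dvd_prod_sub_one fun i hi => ⟨-q ^ (i - a), ?_⟩
  rw [mem_Ico] at hi
  rw [mul_neg, ← pow_add, show a + 1 + (i - a) = i + 1 by omega]
  ring

/-- The Gaussian binomial coefficient `[m, j]_q`, extended by zero to `j ∉ [0, m]`. -/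
def qBinomial (q : k⟦X⟧) (m : ℕ) (j : ℤ) : k⟦X⟧ :=
  if 0 ≤ j ∧ j ≤ m then
    qPochhammer q m * (qPochhammer q j.toNat)⁻¹ * (qPochhammer q (m - j.toNat))⁻¹
  else 0

theorem qBinomial_add (q : k⟦X⟧) (a b : ℕ) : qBinomial q (a + b) a =
    qPochhammer q (a + b) * (qPochhammer q a)⁻¹ * (qPochhammer q b)⁻¹ := by
  rw [qBinomial, if_pos (by omega), Int.toNat_natCast, Nat.add_sub_cancel_left]

theorem qBinomial_of_notMem {m : ℕ} {j : ℤ} (h : ¬(0 ≤ j ∧ j ≤ m)) : qBinomial q m j = 0 :=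
  if_neg h

theorem mem_of_qBinomial_ne_zero {m : ℕ} {j : ℤ} (h : qBinomial q m j ≠ 0) : 0 ≤ j ∧ j ≤ m :=
  not_not.mp (mt qBinomial_of_notMem h)

theorem qBinomial_symm (q : k⟦X⟧) (m : ℕ) (j : ℤ) : qBinomial q m (m - j) = qBinomial q m j := by
  by_cases hj : 0 ≤ j ∧ j ≤ m
  · obtain ⟨a, b, rfl, rfl⟩ : ∃ a b : ℕ, j = a ∧ m = a + b :=
      ⟨j.toNat, m - j.toNat, by omega, by omega⟩
    rw [show ((a + b : ℕ) : ℤ) - a = b by push_cast; ring, add_comm a b, qBinomial_add,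
      add_comm b a, qBinomial_add]
    ring
  · rw [qBinomial_of_notMem hj, qBinomial_of_notMem (by omega)]

theorem qBinomial_mul_qPochhammer (hq : constantCoeff q = 0) (a b : ℕ) :
    qBinomial q (a + b) a * qPochhammer q a * qPochhammer q b = qPochhammer q (a + b) := by
  rw [qBinomial_add]
  linear_combination (qPochhammer q (a + b) * qPochhammer q a * (qPochhammer q a)⁻¹) *
    qPochhammer_mul_inv hq b + qPochhammer q (a + b) * qPochhammer_mul_inv hq a

theorem qBinomial_zero_right (hq : constantCoeff q = 0) (m : ℕ) : qBinomial q m 0 = 1 := by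
  refine mul_right_cancel₀ (qPochhammer_ne_zero hq m) ?_
  simpa [qPochhammer_zero] using qBinomial_mul_qPochhammer hq 0 m

theorem qBinomial_self (hq : constantCoeff q = 0) (m : ℕ) : qBinomial q m m = 1 := by
  refine mul_right_cancel₀ (qPochhammer_ne_zero hq m) ?_
  simpa [qPochhammer_zero] using qBinomial_mul_qPochhammer hq m 0

theorem qBinomial_add_add_two (hq : constantCoeff q = 0) (a b : ℕ) :
    qBinomial q (a + b + 2) (a + 1 : ℕ) =
      qBinomial q (a + b + 1) a + q ^ (a + 1) * qBinomial q (a + b + 1) (a + 1 : ℕ) := by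
  refine mul_right_cancel₀ (mul_ne_zero (qPochhammer_ne_zero hq (a + 1))
    (qPochhammer_ne_zero hq (b + 1))) ?_
  have h₁ := qBinomial_mul_qPochhammer hq (a + 1) (b + 1)
  have h₂ := qBinomial_mul_qPochhammer hq a (b + 1)
  have h₃ := qBinomial_mul_qPochhammer hq (a + 1) b
  rw [show a + 1 + (b + 1) = a + b + 2 by ring] at h₁
  rw [show a + (b + 1) = a + b + 1 by ring] at h₂
  rw [show a + 1 + b = a + b + 1 by ring] at h₃
  simp only [qPochhammer_succ] at h₁ h₂ h₃ ⊢
  linear_combination h₁ - (1 - q ^ (a + 1)) * h₂ - q ^ (a + 1) * (1 - q ^ (b + 1)) * h₃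

/-- The `toNat` exponent is harmless: where `j < 0`, the coefficient it multiplies vanishes. -/
theorem qBinomial_succ (hq : constantCoeff q = 0) (m : ℕ) (j : ℤ) :
    qBinomial q (m + 1) j = qBinomial q m (j - 1) + q ^ j.toNat * qBinomial q m j := by
  rcases (show (j < 0 ∨ (m : ℤ) + 1 < j) ∨ j = 0 ∨ (1 ≤ j ∧ j ≤ m) ∨ j = m + 1 by omega)
    with hj | rfl | hj | rfl
  · rw [qBinomial_of_notMem (m := m + 1) (j := j) (by omega),
      qBinomial_of_notMem (m := m) (j := j) (by omega),
      qBinomial_of_notMem (m := m) (j := j - 1) (by omega)]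
    ring
  · rw [qBinomial_of_notMem (m := m) (j := 0 - 1) (by omega)]
    simp [qBinomial_zero_right hq]
  · obtain ⟨a, b, rfl, rfl⟩ : ∃ a b : ℕ, j = (a + 1 : ℕ) ∧ m = a + b + 1 :=
      ⟨j.toNat - 1, m - j.toNat, by omega, by omega⟩
    simpa using qBinomial_add_add_two hq a b
  · have h := qBinomial_self hq (m + 1)
    push_cast at h
    rw [h, add_sub_cancel_right, qBinomial_self hq,
      qBinomial_of_notMem (m := m) (j := m + 1) (by omega)]
    ring

theorem qBinomial_succ' (hq : constantCoeff q = 0) (m : ℕ) (j : ℤ) :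
    qBinomial q (m + 1) j = qBinomial q m j + q ^ (m + 1 - j).toNat * qBinomial q m (j - 1) := by
  rw [← qBinomial_symm, Nat.cast_succ, qBinomial_succ hq, ← qBinomial_symm q m j,
    ← qBinomial_symm q m (j - 1)]
  ring_nf

theorem qBinomial_add_two (hq : constantCoeff q = 0) (m : ℕ) (j : ℤ) :
    qBinomial q (m + 2) (j + 1) =
      (1 + q ^ (m + 1)) * qBinomial q m j + q ^ (m + 1 - j).toNat * qBinomial q m (j - 1) +
        q ^ (j + 1).toNat * qBinomial q m (j + 1) := by
  have hpow : q ^ (m + 1 - j).toNat * q ^ j.toNat * qBinomial q m j =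
      q ^ (m + 1) * qBinomial q m j := by
    by_cases hj : 0 ≤ j ∧ j ≤ m
    · rw [← pow_add, show (m + 1 - j).toNat + j.toNat = m + 1 by omega]
    · simp [qBinomial_of_notMem hj]
  rw [qBinomial_succ' hq, qBinomial_succ hq, qBinomial_succ hq, add_sub_cancel_right]
  push_cast
  rw [show (m : ℤ) + 1 + 1 - (j + 1) = m + 1 - j by ring]
  linear_combination hpow

theorem pow_dvd_qPochhammer_mul_qBinomial_sub_one (hq : constantCoeff q = 0) {K : ℕ} {t : ℤ}
    (ht : t.natAbs ≤ K) :
    q ^ (K - t.natAbs + 1) ∣ qPochhammer q K * qBinomial q (2 * K) (K + t) - 1 := by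
  set a := t.natAbs
  have hbinom : qBinomial q (2 * K) (K + t) = qBinomial q ((K + a) + (K - a)) (K + a : ℕ) := by
    rw [show (K + a) + (K - a) = 2 * K by omega]
    rcases le_or_gt 0 t with h | h
    · congr 1; omega
    · rw [← qBinomial_symm]; congr 1; push_cast; omega
  rw [hbinom, qBinomial_add, show (K + a) + (K - a) = 2 * K by omega]
  have h₁ := pow_dvd_qPochhammer_mul_inv_sub_one hq (show K - a ≤ K by omega)
  have h₂ := (pow_dvd_pow q (show K - a + 1 ≤ K + a + 1 by omega)).trans
    (pow_dvd_qPochhammer_mul_inv_sub_one hq (show K + a ≤ 2 * K by omega))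
  have hsplit : qPochhammer q K * (qPochhammer q (2 * K) * (qPochhammer q (K + a))⁻¹ *
      (qPochhammer q (K - a))⁻¹) - 1 =
      (qPochhammer q K * (qPochhammer q (K - a))⁻¹ - 1) *
        (qPochhammer q (2 * K) * (qPochhammer q (K + a))⁻¹) +
      (qPochhammer q (2 * K) * (qPochhammer q (K + a))⁻¹ - 1) := by ring
  rw [hsplit]
  exact (h₁.mul_right _).add h₂

end QBinomial

def thetaExponent (t : ℤ) : ℕ := (4 * t ^ 2 + 2 * t).toNat

theorem thetaExponent_cast (t : ℤ) : (thetaExponent t : ℤ) = 4 * t ^ 2 + 2 * t := by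
  refine Int.toNat_of_nonneg ?_
  rcases le_or_gt 0 t with h | h <;> nlinarith

theorem natAbs_le_thetaExponent (t : ℤ) : t.natAbs ≤ thetaExponent t := by
  zify
  rw [thetaExponent_cast]
  rcases le_or_gt 0 t with h | h
  · rw [abs_of_nonneg h]; nlinarith
  · rw [abs_of_neg h]; nlinarith

theorem eight_mul_natAbs_le_thetaExponent_add_six (t : ℤ) :
    8 * t.natAbs ≤ thetaExponent t + 6 := by
  zify
  rw [thetaExponent_cast]
  rcases le_or_gt 0 t with h | h
  · rw [abs_of_nonneg h]; nlinarith
  · rw [abs_of_neg h]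
    rcases (show t = -1 ∨ t ≤ -2 by omega) with rfl | h' <;> nlinarith

noncomputable section JacobiTripleProduct

variable {k : Type*} [Field k]

variable (k) in
def jacobiTerm (n : ℕ) (t : ℤ) : k⟦X⟧ :=
  C ((-1 : k) ^ t) * X ^ thetaExponent t * qBinomial (X ^ 8) (2 * n) (n + t)

theorem constantCoeff_X_pow_eight : constantCoeff ((X : k⟦X⟧) ^ 8) = 0 := by simp

theorem jacobiTerm_eq_zero {n : ℕ} {t : ℤ} (h : n < t.natAbs) : jacobiTerm k n t = 0 := by
  rw [jacobiTerm, qBinomial_of_notMem (by omega), mul_zero]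

theorem hasFiniteSupport_jacobiTerm_add (n : ℕ) (c : ℤ) :
    Function.HasFiniteSupport fun t => jacobiTerm k n (t + c) :=
  (Set.finite_Icc (-n - c) (n - c)).subset fun t ht => by
    by_contra hmem
    rw [Set.mem_Icc] at hmem
    exact ht (jacobiTerm_eq_zero (by omega))

theorem finsum_jacobiTerm_add (n : ℕ) (c : ℤ) :
    ∑ᶠ t, jacobiTerm k n (t + c) = ∑ᶠ t, jacobiTerm k n t :=
  finsum_comp_equiv (Equiv.addRight c)

theorem X_pow_mul_jacobiTerm_sub_one (n : ℕ) (t : ℤ) :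
    X ^ (8 * n + 6) * jacobiTerm k n (t - 1) = -(C ((-1 : k) ^ t) * X ^ thetaExponent t *
      ((X ^ 8) ^ (n + 1 - t).toNat * qBinomial (X ^ 8) (2 * n) (n + t - 1))) := by
  rw [jacobiTerm, ← add_sub_assoc]
  by_cases hB : qBinomial (X ^ 8 : k⟦X⟧) (2 * n) (n + t - 1) = 0
  · simp [hB]
  have := mem_of_qBinomial_ne_zero hB
  have he := thetaExponent_cast t
  have he' : (thetaExponent (t - 1) : ℤ) = 4 * t ^ 2 - 6 * t + 2 := by
    rw [thetaExponent_cast]; ring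
  have hX : (X : k⟦X⟧) ^ thetaExponent t * (X ^ 8) ^ (n + 1 - t).toNat =
      X ^ (8 * n + 6) * X ^ thetaExponent (t - 1) := by
    rw [← pow_mul, ← pow_add, ← pow_add]; congr 1; omega
  have hs : C ((-1 : k) ^ t) = -C ((-1 : k) ^ (t - 1)) := by
    rw [zpow_sub_one₀ (by norm_num)]; simp
  linear_combination C ((-1 : k) ^ t) * qBinomial (X ^ 8) (2 * n) (n + t - 1) * hX +
    X ^ (8 * n + 6) * X ^ thetaExponent (t - 1) * qBinomial (X ^ 8) (2 * n) (n + t - 1) * hs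

theorem X_pow_mul_jacobiTerm_add_one (n : ℕ) (t : ℤ) :
    X ^ (8 * n + 2) * jacobiTerm k n (t + 1) = -(C ((-1 : k) ^ t) * X ^ thetaExponent t *
      ((X ^ 8) ^ (n + t + 1).toNat * qBinomial (X ^ 8) (2 * n) (n + t + 1))) := by
  rw [jacobiTerm, ← add_assoc]
  by_cases hB : qBinomial (X ^ 8 : k⟦X⟧) (2 * n) (n + t + 1) = 0
  · simp [hB]
  have := mem_of_qBinomial_ne_zero hB
  have he := thetaExponent_cast t
  have he' : (thetaExponent (t + 1) : ℤ) = 4 * t ^ 2 + 10 * t + 6 := by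
    rw [thetaExponent_cast]; ring
  have hX : (X : k⟦X⟧) ^ thetaExponent t * (X ^ 8) ^ (n + t + 1).toNat =
      X ^ (8 * n + 2) * X ^ thetaExponent (t + 1) := by
    rw [← pow_mul, ← pow_add, ← pow_add]; congr 1; omega
  have hs : C ((-1 : k) ^ t) = -C ((-1 : k) ^ (t + 1)) := by
    rw [zpow_add_one₀ (by norm_num)]; simp
  linear_combination C ((-1 : k) ^ t) * qBinomial (X ^ 8) (2 * n) (n + t + 1) * hX +
    X ^ (8 * n + 2) * X ^ thetaExponent (t + 1) * qBinomial (X ^ 8) (2 * n) (n + t + 1) * hs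

theorem jacobiTerm_succ (n : ℕ) (t : ℤ) :
    jacobiTerm k (n + 1) t = (1 + X ^ (16 * n + 8)) * jacobiTerm k n t -
      X ^ (8 * n + 6) * jacobiTerm k n (t - 1) - X ^ (8 * n + 2) * jacobiTerm k n (t + 1) := by
  have hbinom : qBinomial (X ^ 8 : k⟦X⟧) (2 * (n + 1)) ((n + 1 : ℕ) + t) =
      qBinomial (X ^ 8) (2 * n + 2) (n + t + 1) := by
    congr 1; push_cast; ring
  have hX : ((X : k⟦X⟧) ^ 8) ^ (2 * n + 1) = X ^ (16 * n + 8) := by rw [← pow_mul]; ring_nf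
  rw [X_pow_mul_jacobiTerm_sub_one, X_pow_mul_jacobiTerm_add_one, jacobiTerm, hbinom,
    qBinomial_add_two constantCoeff_X_pow_eight, jacobiTerm,
    show ((2 * n : ℕ) : ℤ) + 1 - (n + t) = n + 1 - t by push_cast; ring]
  linear_combination C ((-1 : k) ^ t) * X ^ thetaExponent t * qBinomial (X ^ 8) (2 * n) (n + t) * hX

theorem prod_eq_finsum_jacobiTerm (n : ℕ) :
    ∏ i ∈ range n, (1 - (X : k⟦X⟧) ^ (8 * i + 2)) * (1 - X ^ (8 * i + 6)) =
      ∑ᶠ t, jacobiTerm k n t := by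
  induction n with
  | zero =>
    rw [prod_range_zero, finsum_eq_single _ 0 fun t ht => jacobiTerm_eq_zero (by omega)]
    simp [jacobiTerm, thetaExponent, qBinomial_zero_right constantCoeff_X_pow_eight]
  | succ n ih =>
    have hfin (c : ℤ) := hasFiniteSupport_jacobiTerm_add (k := k) n c
    have hfin₀ : Function.HasFiniteSupport (jacobiTerm k n) := by simpa using hfin 0
    simp_rw [prod_range_succ, ih, jacobiTerm_succ, sub_eq_add_neg (_ : ℤ) 1]
    rw [finsum_sub_distrib ((hfin₀.fun_mul_right _).fun_sub ((hfin (-1)).fun_mul_right _))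
        ((hfin 1).fun_mul_right _),
      finsum_sub_distrib (hfin₀.fun_mul_right _) ((hfin (-1)).fun_mul_right _),
      ← mul_finsum, ← mul_finsum, ← mul_finsum, finsum_jacobiTerm_add, finsum_jacobiTerm_add]
    ring

theorem prod_allowedParts_one_sub_X_pow_two_mul (K : ℕ) :
    ∏ j ∈ allowedParts (4 * K), (1 - (X : k⟦X⟧) ^ (2 * j)) =
      (∏ i ∈ range K, (1 - X ^ (8 * i + 2)) * (1 - X ^ (8 * i + 6))) * qPochhammer (X ^ 8) K := by
  induction K with
  | zero => simp [allowedParts, qPochhammer_zero]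
  | succ K ih =>
    rw [allowedParts_four_mul_succ, prod_insert (by simp [allowedParts]),
      prod_insert (by simp [allowedParts]), prod_insert (by simp [allowedParts]), ih,
      prod_range_succ, qPochhammer_succ, ← pow_mul]
    ring_nf

end JacobiTripleProduct

theorem coeff_mul_qPochhammer_mul_jacobiTerm {n K : ℕ} (hn : n < 8 * K + 2) (hnK : n ≤ 4 * K)
    {t : ℤ} (ht : t.natAbs ≤ K) :
    coeff n ((∏ j ∈ allowedParts (4 * K), (1 - (X : ℚ⟦X⟧) ^ j)⁻¹) *
      (qPochhammer (X ^ 8) K * jacobiTerm ℚ K t)) =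
      (-1 : ℚ) ^ t * podZ (n - thetaExponent t) := by
  have hJ : qPochhammer (X ^ 8) K * jacobiTerm ℚ K t = C ((-1 : ℚ) ^ t) * (X ^ thetaExponent t *
      (qPochhammer (X ^ 8) K * qBinomial (X ^ 8) (2 * K) (K + t))) := by
    rw [jacobiTerm]; ring
  rw [hJ, mul_left_comm, coeff_C_mul, mul_left_comm, coeff_X_pow_mul', podZ]
  by_cases he : thetaExponent t ≤ n
  · have hdvd : (X : ℚ⟦X⟧) ^ (n - thetaExponent t + 1) ∣
        qPochhammer (X ^ 8) K * qBinomial (X ^ 8) (2 * K) (K + t) - 1 := by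
      refine (pow_dvd_pow X ?_).trans (by
        rw [pow_mul]; exact pow_dvd_qPochhammer_mul_qBinomial_sub_one constantCoeff_X_pow_eight ht)
      have := eight_mul_natAbs_le_thetaExponent_add_six t
      omega
    rw [if_pos he, if_pos (by omega), coeff_mul_of_X_pow_dvd_sub_one hdvd,
      ← pod_eq_coeff (by omega),
      show ((n : ℤ) - thetaExponent t).toNat = n - thetaExponent t by omega]
  · rw [if_neg he, if_neg (by omega)]
    simp

theorem Q2_eq_finsum (n : ℕ) :
    (Q2 n : ℚ) = ∑ᶠ t : ℤ, (-1 : ℚ) ^ t * podZ (n - thetaExponent t) := by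
  set K := n + 1
  have hsupp_J : Function.support (jacobiTerm ℚ K) ⊆ Icc (-K : ℤ) K := fun t ht => by
    by_contra hmem
    rw [coe_Icc, Set.mem_Icc] at hmem
    exact ht (jacobiTerm_eq_zero (by omega))
  have hsupp : Function.support (fun t : ℤ => (-1 : ℚ) ^ t * podZ (n - thetaExponent t)) ⊆
      Icc (-K : ℤ) K := fun t ht => by
    by_contra hmem
    rw [coe_Icc, Set.mem_Icc] at hmem
    have := natAbs_le_thetaExponent t
    exact ht (by simp only [podZ, if_neg (show ¬(0 : ℤ) ≤ n - thetaExponent t by omega),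
      Nat.cast_zero, mul_zero])
  rw [Q2_eq_coeff (show n ≤ 4 * K by omega), prod_one_add_X_pow (by simp [allowedParts]),
    prod_allowedParts_one_sub_X_pow_two_mul, prod_eq_finsum_jacobiTerm,
    finsum_eq_sum_of_support_subset _ hsupp_J, finsum_eq_sum_of_support_subset _ hsupp,
    mul_comm _ (qPochhammer _ _), mul_sum, mul_sum, map_sum]
  exact sum_congr rfl fun t ht =>
    coeff_mul_qPochhammer_mul_jacobiTerm (by omega) (by omega) (by rw [mem_Icc] at ht; omega)

theorem intEquivNat_natCast (m : ℕ) : Equiv.intEquivNat m = 2 * m := rfl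

theorem intEquivNat_negSucc (m : ℕ) : Equiv.intEquivNat (Int.negSucc m) = 2 * m + 1 := rfl

theorem thetaExponent_eq_intEquivNat (t : ℤ) :
    thetaExponent t = Equiv.intEquivNat t * (Equiv.intEquivNat t + 1) := by
  zify
  rw [thetaExponent_cast]
  cases t with
  | ofNat m => rw [Int.ofNat_eq_natCast, intEquivNat_natCast]; push_cast; ring
  | negSucc m => rw [intEquivNat_negSucc, Int.negSucc_eq]; push_cast; ring

theorem neg_one_zpow_eq_pow_intEquivNat {R : Type*} [DivisionRing R] (t : ℤ) :
    (-1 : R) ^ t = (-1) ^ (Equiv.intEquivNat t * (Equiv.intEquivNat t + 1) / 2) := by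
  cases t with
  | ofNat m =>
    rw [Int.ofNat_eq_natCast, zpow_natCast, intEquivNat_natCast,
      show 2 * m * (2 * m + 1) / 2 = m * (2 * m + 1) by
        rw [mul_assoc, Nat.mul_div_cancel_left _ two_pos],
      neg_one_pow_eq_pow_mod_two (n := m * _), neg_one_pow_eq_pow_mod_two (n := m)]
    simp [Nat.mul_mod, Nat.add_mod]
  | negSucc m =>
    rw [zpow_negSucc, ← inv_pow, inv_neg_one, intEquivNat_negSucc,
      show (2 * m + 1) * (2 * m + 1 + 1) / 2 = (2 * m + 1) * (m + 1) by
        rw [show 2 * m + 1 + 1 = 2 * (m + 1) by ring, mul_left_comm,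
          Nat.mul_div_cancel_left _ two_pos],
      neg_one_pow_eq_pow_mod_two (n := _ * (m + 1)), neg_one_pow_eq_pow_mod_two (n := m + 1)]
    simp [Nat.mul_mod, Nat.add_mod]

theorem finsum_neg_one_zpow_mul_podZ (n : ℕ) :
    ∑ᶠ t : ℤ, (-1 : ℚ) ^ t * podZ (n - thetaExponent t) =
      ∑ k ∈ range (n + 1), (-1 : ℚ) ^ (k * (k + 1) / 2) * podZ ((n : ℤ) - k * (k + 1)) := by
  have hsupp : Function.support
      (fun k : ℕ => (-1 : ℚ) ^ (k * (k + 1) / 2) * podZ ((n : ℤ) - k * (k + 1))) ⊆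
      range (n + 1) := fun k hk => by
    by_contra hmem
    rw [coe_range, Set.mem_Iio] at hmem
    have : (n : ℤ) < k * (k + 1) := by norm_cast; nlinarith
    exact hk (by simp only [podZ, if_neg (show ¬(0 : ℤ) ≤ n - k * (k + 1) by omega),
      Nat.cast_zero, mul_zero])
  rw [← finsum_eq_sum_of_support_subset _ hsupp, ← finsum_comp_equiv Equiv.intEquivNat]
  refine finsum_congr fun t => ?_
  rw [thetaExponent_eq_intEquivNat, neg_one_zpow_eq_pow_intEquivNat]
  push_cast
  rfl

/-- Terms with `k(k+1) > n` vanish, and any nonzero term has `k ≤ n`, so the infinite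
sum `∑_{k=0}^∞` equals the finite sum over `0 ≤ k ≤ n`. -/
theorem stmt_5 (n : ℕ) :
    (Q2 n : ℤ) =
      ∑ k ∈ Finset.range (n + 1), (-1 : ℤ) ^ (k * (k + 1) / 2) * (podZ ((n : ℤ) - k * (k + 1)) : ℤ) := by
  exact_mod_cast (Q2_eq_finsum n).trans (finsum_neg_one_zpow_mul_podZ n)
end

section
/- As formal power series, (-q;q^4)_\infty(-q^2;q^4)_\infty(-q^3;q^4)_\infty \cdot (q^2;q^2)_\infty/(-q;q^2)_\infty = 1 + 2\sum_{n=1}^{\infty}(-1)^n q^{4n^2}. -/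
open scoped Classical

/-- Formal infinite product `∏_{k=0}^∞ f k` of power series, for families where
`f k ≡ 1 (mod q^{k+1})` (as for all q-Pochhammer factors below): the coefficient of `q^n`
is then the (stable) coefficient of `q^n` in any partial product `∏_{k≤N} f k` with `N ≥ n`. -/
noncomputable def infProd (f : ℕ → PowerSeries ℚ) : PowerSeries ℚ :=
  PowerSeries.mk fun n => PowerSeries.coeff (R := ℚ) n (∏ k ∈ Finset.range (n + 1), f k)

/-- `(-q;q⁴)_∞` -/
noncomputable def P1 : PowerSeries ℚ :=
  infProd fun k => 1 + (PowerSeries.X : PowerSeries ℚ) ^ (4 * k + 1)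
/-- `(-q²;q⁴)_∞` -/
noncomputable def P2 : PowerSeries ℚ :=
  infProd fun k => 1 + (PowerSeries.X : PowerSeries ℚ) ^ (4 * k + 2)
/-- `(-q³;q⁴)_∞` -/
noncomputable def P3 : PowerSeries ℚ :=
  infProd fun k => 1 + (PowerSeries.X : PowerSeries ℚ) ^ (4 * k + 3)
/-- `(q²;q²)_∞` -/
noncomputable def P4 : PowerSeries ℚ :=
  infProd fun k => 1 - (PowerSeries.X : PowerSeries ℚ) ^ (2 * k + 2)
/-- `(-q;q²)_∞` -/
noncomputable def P5 : PowerSeries ℚ :=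
  infProd fun k => 1 + (PowerSeries.X : PowerSeries ℚ) ^ (2 * k + 1)

/-- The right-hand side `1 + 2∑_{n≥1} (-1)^n q^{4n²}`: its `q^n`-coefficient is `1` for
`n = 0`, `2(-1)^m` when `n = 4m²` with `m > 0`, and `0` otherwise. -/
noncomputable def RHS : PowerSeries ℚ :=
  PowerSeries.mk fun n =>
    if n = 0 then 1
    else if ∃ m : ℕ, 0 < m ∧ n = 4 * m ^ 2 then (-1) ^ Nat.sqrt (n / 4) * 2 else 0

/-!
Since `(-q;q⁴)(-q³;q⁴) = (-q;q²)`, `(q²;q²) = (q²;q⁴)(q⁴;q⁴)`, `(-q²;q⁴)(q²;q⁴) = (q⁴;q⁸)` and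
`(q⁴;q⁴) = (q⁴;q⁸)(q⁸;q⁸)`, the left side is `(Q;Q²)²(Q²;Q²)` with `Q = q⁴`, and the claim is
Gauss's identity `(Q;Q²)²_∞ (Q²;Q²)_∞ = ∑_{j ∈ ℤ} (-1)ʲ Q^{j²}`.

Its finite form `∑ⱼ (-1)ʲ Q^{j²} [2N, N+j]_{Q²} = (Q;Q²)_N²` follows by induction on `N` from the
two Pascal rules for Gaussian binomials. After multiplication by `(Q²;Q²)_N` the binomial
`[2N, N+j]_{Q²}` becomes a product of factors `1 - Q^{2i}` with `i > N - |j|`, so letting `N → ∞`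
coefficientwise turns the finite identity into Gauss's.
-/

open PowerSeries
open scoped PowerSeries.WithPiTopology

section QBinom

variable {R : Type*} [CommRing R] (c : R)

theorem one_sub_pow_smodEq_one {n m : ℕ} (h : n ≤ m) :
    1 - c ^ m ≡ 1 [SMOD Ideal.span {c ^ n}] := by
  rw [SModEq.sub_mem, sub_sub_cancel_left, Ideal.mem_span_singleton]
  exact (pow_dvd_pow c h).neg_right

theorem one_add_pow_smodEq_one {n m : ℕ} (h : n ≤ m) :
    1 + c ^ m ≡ 1 [SMOD Ideal.span {c ^ n}] := by
  rw [SModEq.sub_mem, add_sub_cancel_left, Ideal.mem_span_singleton]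
  exact pow_dvd_pow c h

theorem prod_smodEq_one {ι : Type*} {I : Ideal R} {s : Finset ι} {f : ι → R}
    (h : ∀ i ∈ s, f i ≡ 1 [SMOD I]) : ∏ i ∈ s, f i ≡ 1 [SMOD I] := by
  simpa using SModEq.prod h

theorem prod_one_sub_pow_smodEq_one {n : ℕ} {s : Finset ℕ} {e : ℕ → ℕ}
    (h : ∀ i ∈ s, n ≤ e i) :
    ∏ i ∈ s, (1 - c ^ e i) ≡ 1 [SMOD Ideal.span {c ^ n}] :=
  prod_smodEq_one fun i hi => one_sub_pow_smodEq_one c (h i hi)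

/-- Gaussian binomial coefficient `[m, k]_c`, indexed by `k : ℤ` (vanishing unless
`0 ≤ k ≤ m`) so that sums over `k` can be reindexed by translations of `ℤ`. -/
def qBinom : ℕ → ℤ → R
  | 0, k => if k = 0 then 1 else 0
  | m + 1, k => qBinom m (k - 1) + c ^ k.toNat * qBinom m k

theorem qBinom_succ (m : ℕ) (k : ℤ) :
    qBinom c (m + 1) k = qBinom c m (k - 1) + c ^ k.toNat * qBinom c m k := rfl

theorem qBinom_eq_zero {m : ℕ} {k : ℤ} (h : k < 0 ∨ (m : ℤ) < k) : qBinom c m k = 0 := by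
  induction m generalizing k with
  | zero => exact if_neg (by omega)
  | succ m ih => rw [qBinom_succ, ih (by omega), ih (by omega), mul_zero, add_zero]

theorem qBinom_zero_right (m : ℕ) : qBinom c m 0 = 1 := by
  induction m with
  | zero => rfl
  | succ m ih => rw [qBinom_succ, ih, qBinom_eq_zero c (by omega), zero_add, Int.toNat_zero,
      pow_zero, one_mul]

theorem qBinom_self (m : ℕ) : qBinom c m m = 1 := by
  induction m with
  | zero => rfl
  | succ m ih => rw [qBinom_succ, Nat.cast_succ, add_sub_cancel_right, ih,
      qBinom_eq_zero c (by omega), mul_zero, add_zero]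

theorem qBinom_succ' (m : ℕ) (k : ℤ) :
    qBinom c (m + 1) k = c ^ (m + 1 - k).toNat * qBinom c m (k - 1) + qBinom c m k := by
  induction m generalizing k with
  | zero =>
    simp only [qBinom]
    rcases eq_or_ne k 0 with rfl | h0
    · simp
    rcases eq_or_ne k 1 with rfl | h1
    · simp
    simp [h0, h1, sub_eq_zero]
  | succ m ih =>
    have h1 := ih (k - 1)
    have h2 := ih k
    have h3 := qBinom_succ c m (k - 1)
    have h4 := qBinom_succ c m k
    rw [qBinom_succ c (m + 1) k]
    push_cast at h1 h2 ⊢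
    rw [show (m : ℤ) + 1 - (k - 1) = m + 1 + 1 - k by ring] at h1
    have hcross : qBinom c m (k - 1) * (c ^ k.toNat * c ^ (m + 1 - k).toNat)
        = qBinom c m (k - 1) * (c ^ (m + 1 + 1 - k).toNat * c ^ (k - 1).toNat) := by
      by_cases hk : 1 ≤ k ∧ k ≤ m + 1
      · rw [← pow_add, ← pow_add]; congr 2; omega
      · rw [qBinom_eq_zero c (by omega), zero_mul, zero_mul]
    linear_combination h1 + c ^ k.toNat * h2 - c ^ (m + 1 + 1 - k).toNat * h3 - h4 + hcross

theorem qBinom_symm (m : ℕ) (k : ℤ) : qBinom c m (m - k) = qBinom c m k := by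
  induction m generalizing k with
  | zero => simp only [qBinom, Nat.cast_zero, zero_sub, neg_eq_zero]
  | succ m ih =>
    rw [qBinom_succ, qBinom_succ', show (↑(m + 1) : ℤ) - k - 1 = m - k by push_cast; ring,
      show (↑(m + 1) : ℤ) - k = m - (k - 1) by push_cast; ring, ih, ih, add_comm,
      show (m : ℤ) - (k - 1) = m + 1 - k by ring]

theorem qBinom_mul_prod_one_sub_pow (a k : ℕ) :
    qBinom c (a + k) k * ∏ i ∈ Finset.range k, (1 - c ^ (i + 1))
      = ∏ i ∈ Finset.range k, (1 - c ^ (a + i + 1)) := by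
  induction k generalizing a with
  | zero => simp [qBinom_zero_right]
  | succ k ihk =>
    induction a with
    | zero => simp only [Nat.zero_add, qBinom_self, one_mul]
    | succ a iha =>
      have hpascal : qBinom c (a + 1 + (k + 1)) ↑(k + 1)
          = c ^ (a + 1) * qBinom c (a + 1 + k) k + qBinom c (a + (k + 1)) ↑(k + 1) := by
        rw [show a + 1 + (k + 1) = a + k + 1 + 1 by ring, qBinom_succ',
          show a + (k + 1) = a + k + 1 by ring, show a + 1 + k = a + k + 1 by ring,
          show (↑(a + k + 1) + 1 - ↑(k + 1) : ℤ).toNat = a + 1 by omega,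
          show (↑(k + 1) : ℤ) - 1 = k by push_cast; ring]
      have hshift : ∏ i ∈ Finset.range (k + 1), (1 - c ^ (a + i + 1))
          = (1 - c ^ (a + 1)) * ∏ i ∈ Finset.range k, (1 - c ^ (a + 1 + i + 1)) := by
        rw [Finset.prod_range_succ', mul_comm]
        ring_nf
      rw [hpascal, add_mul, iha, Finset.prod_range_succ (fun i => 1 - c ^ (i + 1)), hshift,
        Finset.prod_range_succ]
      linear_combination (c ^ (a + 1) * (1 - c ^ (k + 1))) * ihk (a + 1)

theorem qBinom_mul_prod_smodEq_one {N : ℕ} {j : ℤ} (hj : j.natAbs ≤ N) :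
    qBinom c (2 * N) (N + j) * ∏ i ∈ Finset.range N, (1 - c ^ (i + 1))
      ≡ 1 [SMOD Ideal.span {c ^ (N - j.natAbs + 1)}] := by
  set s := j.natAbs
  have hB : qBinom c (2 * N) (N + j) = qBinom c (N + s + (N - s)) (N - s : ℕ) := by
    rw [show N + s + (N - s) = 2 * N by omega]
    rcases le_or_gt j 0 with h | h
    · congr 1; omega
    · rw [← qBinom_symm]; congr 1; push_cast; omega
  have hP : ∏ i ∈ Finset.range N, (1 - c ^ (i + 1)) = (∏ i ∈ Finset.range (N - s),
      (1 - c ^ (i + 1))) * ∏ i ∈ Finset.range s, (1 - c ^ (N - s + i + 1)) := by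
    rw [← Finset.prod_range_add, Nat.sub_add_cancel hj]
  rw [hB, hP, ← mul_assoc, qBinom_mul_prod_one_sub_pow]
  simpa using (prod_one_sub_pow_smodEq_one c fun i _ => by omega).mul
    (prod_one_sub_pow_smodEq_one c fun i _ => by omega)

theorem hasFiniteSupport_mul_qBinom (f : ℤ → R) (m : ℕ) (a : ℤ) :
    Function.HasFiniteSupport fun j => f j * qBinom c m (a + j) := by
  refine (Set.finite_Icc (-a) (m - a)).subset fun j hj => ?_
  by_contra hj'
  rw [Set.mem_Icc] at hj'
  exact hj (by simp only [qBinom_eq_zero c (by omega : a + j < 0 ∨ (m : ℤ) < a + j), mul_zero])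

end QBinom

section FiniteTheta

variable {R : Type*} [CommRing R] (q : R)

theorem neg_one_pow_natAbs_add_one (j : ℤ) : (-1 : R) ^ (j + 1).natAbs = -(-1) ^ j.natAbs := by
  rw [← Int.coe_negOnePow, ← Int.coe_negOnePow, Int.negOnePow_succ, Units.val_neg, Int.cast_neg]

theorem neg_one_pow_natAbs_sub_one (j : ℤ) : (-1 : R) ^ (j - 1).natAbs = -(-1) ^ j.natAbs := by
  rw [← neg_neg ((-1 : R) ^ (j - 1).natAbs), ← neg_one_pow_natAbs_add_one, sub_add_cancel]

theorem pow_natAbs_sq_mul_pow_toNat {i j t : ℤ} {e : ℕ} (ht : 0 ≤ t)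
    (h : i ^ 2 + 2 * t = j ^ 2 + e) :
    q ^ (i.natAbs ^ 2) * (q ^ 2) ^ t.toNat = q ^ e * q ^ (j.natAbs ^ 2) := by
  rw [← pow_mul, ← pow_add, ← pow_add]
  congr 1
  have : ((i.natAbs ^ 2 + 2 * t.toNat : ℕ) : ℤ) = ((e + j.natAbs ^ 2 : ℕ) : ℤ) := by
    push_cast [Int.natCast_natAbs, sq_abs, Int.toNat_of_nonneg ht]
    linarith
  exact_mod_cast this

def thetaTerm (m N : ℕ) (j : ℤ) : R :=
  (-1) ^ j.natAbs * q ^ (j.natAbs ^ 2) * qBinom (q ^ 2) m (N + j)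

noncomputable def finiteTheta (m N : ℕ) : R :=
  ∑ᶠ j : ℤ, thetaTerm q m N j

theorem hasFiniteSupport_thetaTerm (m N : ℕ) : Function.HasFiniteSupport (thetaTerm q m N) :=
  hasFiniteSupport_mul_qBinom _ _ m N

/- In both recursion steps a Pascal rule splits each term in two; the second half, after the
shift `j ↦ j ∓ 1`, is `-q^{2N+1}` times the corresponding term of the sum on the right. -/
theorem finiteTheta_odd (N : ℕ) :
    finiteTheta q (2 * N + 1) (N + 1) = (1 - q ^ (2 * N + 1)) * finiteTheta q (2 * N) N := by
  set g : ℤ → R := fun j => (-1) ^ j.natAbs * q ^ (j.natAbs ^ 2) * (q ^ 2) ^ (N + 1 + j).toNat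
    * qBinom (q ^ 2) (2 * N) ((N + 1 : ℤ) + j)
  have hsplit (j : ℤ) : thetaTerm q (2 * N + 1) (N + 1) j = thetaTerm q (2 * N) N j + g j := by
    rw [thetaTerm, thetaTerm, qBinom_succ,
      show (↑(N + 1) : ℤ) + j - 1 = N + j by push_cast; ring]
    simp only [g]; push_cast; ring
  have hshift (j : ℤ) : g (j - 1) = -q ^ (2 * N + 1) * thetaTerm q (2 * N) N j := by
    simp only [g, thetaTerm]
    rw [show (N + 1 : ℤ) + (j - 1) = N + j by ring]
    by_cases hj : 0 ≤ (N : ℤ) + j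
    · have hexp := pow_natAbs_sq_mul_pow_toNat q (i := j - 1) (j := j) (e := 2 * N + 1) hj
        (by push_cast; ring)
      generalize qBinom (q ^ 2) (2 * N) (N + j) = b
      rw [neg_one_pow_natAbs_sub_one]
      linear_combination (-(-1 : R) ^ j.natAbs * b) * hexp
    · rw [qBinom_eq_zero (q ^ 2) (by omega)]
      ring
  rw [finiteTheta, finiteTheta, finsum_congr hsplit, finsum_add_distrib
    (hasFiniteSupport_thetaTerm q _ _) (hasFiniteSupport_mul_qBinom _ _ _ _),
    ← finsum_comp_equiv (Equiv.subRight 1) (f := g)]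
  simp only [Equiv.subRight_apply, hshift]
  rw [← mul_finsum' _ _ (hasFiniteSupport_thetaTerm q _ _)]
  ring

theorem finiteTheta_even (N : ℕ) :
    finiteTheta q (2 * N + 2) (N + 1)
      = (1 - q ^ (2 * N + 1)) * finiteTheta q (2 * N + 1) (N + 1) := by
  set g : ℤ → R := fun j => (-1) ^ j.natAbs * q ^ (j.natAbs ^ 2) * (q ^ 2) ^ (N + 1 - j).toNat
    * qBinom (q ^ 2) (2 * N + 1) (N + j)
  have hsplit (j : ℤ) :
      thetaTerm q (2 * N + 2) (N + 1) j = g j + thetaTerm q (2 * N + 1) (N + 1) j := by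
    rw [thetaTerm, thetaTerm, qBinom_succ',
      show (↑(N + 1) : ℤ) + j - 1 = N + j by push_cast; ring,
      show (↑(2 * N + 1) + 1 - (↑(N + 1) + j) : ℤ) = N + 1 - j by push_cast; ring]
    ring
  have hshift (j : ℤ) : g (j + 1) = -q ^ (2 * N + 1) * thetaTerm q (2 * N + 1) (N + 1) j := by
    simp only [g, thetaTerm]
    rw [show (N : ℤ) + (j + 1) = ↑(N + 1) + j by push_cast; ring,
      show (N + 1 - (j + 1) : ℤ) = N - j by ring]
    by_cases hj : 0 ≤ (N : ℤ) - j
    · have hexp := pow_natAbs_sq_mul_pow_toNat q (i := j + 1) (j := j) (e := 2 * N + 1) hj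
        (by push_cast; ring)
      generalize qBinom (q ^ 2) (2 * N + 1) (↑(N + 1) + j) = b
      rw [neg_one_pow_natAbs_add_one]
      linear_combination (-(-1 : R) ^ j.natAbs * b) * hexp
    · rw [qBinom_eq_zero (q ^ 2) (by omega)]
      ring
  rw [finiteTheta, finiteTheta, finsum_congr hsplit, finsum_add_distrib
    (hasFiniteSupport_mul_qBinom _ _ _ _) (hasFiniteSupport_thetaTerm q _ _),
    ← finsum_comp_equiv (Equiv.addRight 1) (f := g)]
  simp only [Equiv.coe_addRight, hshift]
  rw [← mul_finsum' _ _ (hasFiniteSupport_thetaTerm q _ _)]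
  ring

theorem finiteTheta_zero : finiteTheta q 0 0 = 1 := by
  rw [finiteTheta, finsum_eq_single _ 0 fun j hj => by simp [thetaTerm, qBinom, hj]]
  simp [thetaTerm, qBinom]

/-- Finite form of the Jacobi triple product at `z = -1`. -/
theorem finiteTheta_eq_sq_prod (N : ℕ) :
    finiteTheta q (2 * N) N = (∏ k ∈ Finset.range N, (1 - q ^ (2 * k + 1))) ^ 2 := by
  induction N with
  | zero => simpa using finiteTheta_zero q
  | succ N ih =>
    rw [show 2 * (N + 1) = 2 * N + 2 by ring, finiteTheta_even, finiteTheta_odd, ih,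
      Finset.prod_range_succ]
    ring

end FiniteTheta

theorem PowerSeries.coeff_eq_of_smodEq {R : Type*} [CommRing R] {f g : R⟦X⟧} {n d : ℕ}
    (h : f ≡ g [SMOD Ideal.span {X ^ n}]) (hd : d < n) : coeff d f = coeff d g := by
  rw [SModEq.sub_mem, Ideal.mem_span_singleton, X_pow_dvd_iff] at h
  simpa [sub_eq_zero] using h d hd

theorem hasProd_infProd {f : ℕ → ℚ⟦X⟧} (hf : ∀ k, f k ≡ 1 [SMOD Ideal.span {X ^ k}]) :
    HasProd f (infProd f) := by
  rw [HasProd, WithPiTopology.tendsto_iff_coeff_tendsto]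
  intro d
  refine tendsto_atTop_of_eventually_const (i₀ := Finset.range (d + 1)) fun s hs => ?_
  rw [infProd, coeff_mk]
  refine coeff_eq_of_smodEq ?_ d.lt_succ_self
  rw [← Finset.prod_sdiff hs]
  have htail : ∏ k ∈ s \ Finset.range (d + 1), f k ≡ 1 [SMOD Ideal.span {X ^ (d + 1)}] := by
    refine prod_smodEq_one fun k hk => (hf k).mono ?_
    rw [Finset.mem_sdiff, Finset.mem_range, not_lt] at hk
    exact Ideal.span_singleton_le_span_singleton.2 (pow_dvd_pow X hk.2)
  simpa using htail.mul (SModEq.refl (∏ k ∈ Finset.range (d + 1), f k))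

theorem infProd_eq_even_mul_odd {f : ℕ → ℚ⟦X⟧}
    (hf : ∀ k, f k ≡ 1 [SMOD Ideal.span {X ^ k}]) :
    infProd f = infProd (fun k => f (2 * k)) * infProd fun k => f (2 * k + 1) := by
  have hmono (a k : ℕ) : f (2 * k + a) ≡ 1 [SMOD Ideal.span {X ^ k}] :=
    (hf _).mono (Ideal.span_singleton_le_span_singleton.2 (pow_dvd_pow X (by omega)))
  exact (hasProd_infProd hf).unique
    ((hasProd_infProd (hmono 0)).even_mul_odd (hasProd_infProd (hmono 1)))

theorem infProd_mul_infProd {f g : ℕ → ℚ⟦X⟧}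
    (hf : ∀ k, f k ≡ 1 [SMOD Ideal.span {X ^ k}])
    (hg : ∀ k, g k ≡ 1 [SMOD Ideal.span {X ^ k}]) :
    infProd f * infProd g = infProd fun k => f k * g k := by
  refine ((hasProd_infProd hf).mul (hasProd_infProd hg)).unique (hasProd_infProd fun k => ?_)
  simpa using (hf k).mul (hg k)

theorem constantCoeff_infProd (f : ℕ → ℚ⟦X⟧) :
    constantCoeff (infProd f) = constantCoeff (f 0) := by
  rw [← coeff_zero_eq_constantCoeff_apply, infProd, coeff_mk, Finset.prod_range_one,
    coeff_zero_eq_constantCoeff_apply]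

theorem P5_eq_P1_mul_P3 : P5 = P1 * P3 := by
  unfold P1 P3 P5
  rw [infProd_eq_even_mul_odd fun k => one_add_pow_smodEq_one X (by omega)]
  ring_nf

theorem P4_eq_mul : P4 = (infProd fun k => 1 - (X : ℚ⟦X⟧) ^ (4 * k + 2))
    * infProd fun k => 1 - (X : ℚ⟦X⟧) ^ (4 * k + 4) := by
  unfold P4
  rw [infProd_eq_even_mul_odd fun k => one_sub_pow_smodEq_one X (by omega)]
  ring_nf

theorem P2_mul_infProd : P2 * (infProd fun k => 1 - (X : ℚ⟦X⟧) ^ (4 * k + 2))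
    = infProd fun k => 1 - (X : ℚ⟦X⟧) ^ (8 * k + 4) := by
  unfold P2
  rw [infProd_mul_infProd (fun k => one_add_pow_smodEq_one X (by omega))
    fun k => one_sub_pow_smodEq_one X (by omega)]
  ring_nf

theorem infProd_one_sub_X_pow_four_eq_mul : (infProd fun k => 1 - (X : ℚ⟦X⟧) ^ (4 * k + 4))
    = (infProd fun k => 1 - (X : ℚ⟦X⟧) ^ (8 * k + 4))
      * infProd fun k => 1 - (X : ℚ⟦X⟧) ^ (8 * k + 8) := by
  rw [infProd_eq_even_mul_odd fun k => one_sub_pow_smodEq_one X (by omega)]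
  ring_nf

theorem coeff_RHS (d : ℕ) :
    coeff d RHS = ∑ᶠ j : ℤ, if 4 * j.natAbs ^ 2 = d then (-1 : ℚ) ^ j.natAbs else 0 := by
  rw [RHS, coeff_mk]
  split_ifs with h0 hsq
  · subst h0
    rw [finsum_eq_single _ 0 fun j hj => if_neg (by simpa using hj)]
    simp
  · obtain ⟨m, hm, rfl⟩ := hsq
    have hsupp : (Function.support fun j : ℤ =>
        if 4 * j.natAbs ^ 2 = 4 * m ^ 2 then (-1 : ℚ) ^ j.natAbs else 0)
          ⊆ ↑({(m : ℤ), -(m : ℤ)} : Finset ℤ) := by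
      intro j hj
      have : j.natAbs = m := by
        by_contra hne
        exact hj (if_neg fun h => hne (Nat.pow_left_injective two_ne_zero
          (show j.natAbs ^ 2 = m ^ 2 by omega)))
      simp only [Finset.coe_insert, Finset.coe_singleton, Set.mem_insert_iff,
        Set.mem_singleton_iff]
      omega
    rw [finsum_eq_sum_of_support_subset _ hsupp, Finset.sum_pair (by omega)]
    simp only [sq, Nat.mul_div_cancel_left _ (by norm_num : 0 < 4), Nat.sqrt_eq,
      Int.natAbs_natCast, Int.natAbs_neg, if_true]
    ring
  · refine (finsum_eq_zero_of_forall_eq_zero fun j => if_neg fun h => ?_).symm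
    rcases Nat.eq_zero_or_pos j.natAbs with hj | hj
    · rw [hj] at h; omega
    · exact hsq ⟨j.natAbs, hj, h.symm⟩

theorem coeff_neg_one_pow_mul_X_pow_mul {R : Type*} [CommRing R] (s a d : ℕ) (f : R⟦X⟧) :
    coeff d ((-1) ^ s * X ^ a * f) = if a ≤ d then (-1) ^ s * coeff (d - a) f else 0 := by
  rw [show ((-1) ^ s : R⟦X⟧) = C ((-1) ^ s) by simp, mul_assoc, coeff_C_mul, coeff_X_pow_mul']
  split_ifs <;> simp

theorem coeff_thetaTerm_mul_prod {N d : ℕ} (hd : d ≤ N) (j : ℤ) :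
    coeff d (thetaTerm ((X : ℚ⟦X⟧) ^ 4) (2 * N) N j
      * ∏ i ∈ Finset.range N, (1 - (((X : ℚ⟦X⟧) ^ 4) ^ 2) ^ (i + 1)))
      = if 4 * j.natAbs ^ 2 = d then (-1) ^ j.natAbs else 0 := by
  set s := j.natAbs with hs
  -- gives `d < 4 s² + 8 (N - s + 1)`: only the constant term of `qBinom * ∏` contributes
  have hs2 : s ≤ s ^ 2 := Nat.le_self_pow two_ne_zero s
  by_cases hj : s ≤ N
  · have hc := qBinom_mul_prod_smodEq_one (((X : ℚ⟦X⟧) ^ 4) ^ 2) hj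
    rw [← pow_mul, ← pow_mul, ← hs] at hc
    rw [thetaTerm, ← hs, ← pow_mul, mul_assoc, coeff_neg_one_pow_mul_X_pow_mul]
    by_cases h1 : 4 * s ^ 2 ≤ d
    · rw [if_pos h1, coeff_eq_of_smodEq hc (by omega), coeff_one]
      by_cases h2 : 4 * s ^ 2 = d
      · rw [if_pos (by omega), if_pos h2, mul_one]
      · rw [if_neg (by omega), if_neg h2, mul_zero]
    · rw [if_neg h1, if_neg (by omega)]
  · rw [thetaTerm, ← hs, qBinom_eq_zero _ (by omega), mul_zero, zero_mul, map_zero,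
      if_neg (by omega)]

theorem coeff_gauss_partial_prod {N d : ℕ} (hd : d ≤ N) :
    coeff d ((∏ k ∈ Finset.range N, (1 - (X : ℚ⟦X⟧) ^ (8 * k + 4))) ^ 2
      * ∏ k ∈ Finset.range N, (1 - (X : ℚ⟦X⟧) ^ (8 * k + 8))) = coeff d RHS := by
  have h1 : ∏ k ∈ Finset.range N, (1 - (X : ℚ⟦X⟧) ^ (8 * k + 4))
      = ∏ k ∈ Finset.range N, (1 - ((X : ℚ⟦X⟧) ^ 4) ^ (2 * k + 1)) :=
    Finset.prod_congr rfl fun k _ => by ring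
  have h2 : ∏ k ∈ Finset.range N, (1 - (X : ℚ⟦X⟧) ^ (8 * k + 8))
      = ∏ k ∈ Finset.range N, (1 - (((X : ℚ⟦X⟧) ^ 4) ^ 2) ^ (k + 1)) :=
    Finset.prod_congr rfl fun k _ => by ring
  have hfin := hasFiniteSupport_thetaTerm ((X : ℚ⟦X⟧) ^ 4) (2 * N) N
  rw [h1, h2, ← finiteTheta_eq_sq_prod, finiteTheta, finsum_mul' _ _ hfin,
    map_finsum _ (hfin.subset (Function.support_mul_subset_left _ _)),
    finsum_congr (coeff_thetaTerm_mul_prod hd), coeff_RHS]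

theorem gauss_identity : (infProd fun k => 1 - (X : ℚ⟦X⟧) ^ (8 * k + 4)) ^ 2
    * (infProd fun k => 1 - (X : ℚ⟦X⟧) ^ (8 * k + 8)) = RHS := by
  have hA := hasProd_infProd fun k =>
    one_sub_pow_smodEq_one (X : ℚ⟦X⟧) (m := 8 * k + 4) (by omega)
  have hB := hasProd_infProd fun k =>
    one_sub_pow_smodEq_one (X : ℚ⟦X⟧) (m := 8 * k + 8) (by omega)
  refine tendsto_nhds_unique ((hA.tendsto_prod_nat.pow 2).mul hB.tendsto_prod_nat) ?_
  rw [WithPiTopology.tendsto_iff_coeff_tendsto]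
  exact fun d => tendsto_atTop_of_eventually_const fun N hN => coeff_gauss_partial_prod hN

/-- `(-q;q⁴)_∞(-q²;q⁴)_∞(-q³;q⁴)_∞ · (q²;q²)_∞/(-q;q²)_∞ = 1 + 2∑ (-1)^n q^{4n²}`. -/
theorem stmt_9 : P1 * P2 * P3 * (P4 * P5⁻¹) = RHS := by
  have hP5 : P5 * P5⁻¹ = 1 := PowerSeries.mul_inv_cancel _ (by simp [P5, constantCoeff_infProd])
  calc P1 * P2 * P3 * (P4 * P5⁻¹)
      = P1 * P3 * (P2 * infProd fun k => 1 - X ^ (4 * k + 2))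
        * (infProd fun k => 1 - X ^ (4 * k + 4)) * P5⁻¹ := by rw [P4_eq_mul]; ring
    _ = (infProd fun k => 1 - (X : ℚ⟦X⟧) ^ (8 * k + 4)) ^ 2
        * (infProd fun k => 1 - X ^ (8 * k + 8)) * (P5 * P5⁻¹) := by
      rw [P5_eq_P1_mul_P3, P2_mul_infProd, infProd_one_sub_X_pow_four_eq_mul]; ring
    _ = RHS := by rw [hP5, mul_one, gauss_identity]
end
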